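/- Fix ℓ ∈ ℕ₀ and d = (d_1,…,d_ℓ), r = (r_1,…,r_ℓ) ∈ ℕ^ℓ with d_i ≥ r_i for all i ∈ [ℓ], and set m_ℓ := Σ_{k=1}^ℓ (r_k − 1)·∏_{i=k+1}^ℓ d_i. If n ≥ m_ℓ, then there exists an (actual) polytope P belonging to the class Q̂_ℓ with dim(P) = m_ℓ. -/

import Mathlib

open Pointwise

noncomputable section SparseMaxout

/-- Vectors in `ℝ^n`. -/
abbrev Vec (n : ℕ) := Fin n → ℝ

/-- A polytope is the convex hull of a finite nonempty set of points. -/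
def IsPolytope {n : ℕ} (P : Set (Vec n)) : Prop :=
  ∃ s : Finset (Vec n), s.Nonempty ∧ P = convexHull ℝ (s : Set (Vec n))

/-- A simplex is the convex hull of a finite nonempty affinely independent set of points. -/
def IsSimplex {n : ℕ} (S : Set (Vec n)) : Prop :=
  ∃ (k : ℕ) (pts : Fin k → Vec n), 0 < k ∧ AffineIndependent ℝ pts ∧
    S = convexHull ℝ (Set.range pts)

/-- The support function `f_P(x) = max_{a ∈ P} ⟨a, x⟩` of a set `P`. -/
def suppFn {n : ℕ} (P : Set (Vec n)) (x : Vec n) : ℝ :=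
  sSup ((fun a => ∑ i, a i * x i) '' P)

/-- The dimension of a polytope: the dimension of its affine hull. -/
def polyDim {n : ℕ} (P : Set (Vec n)) : ℕ :=
  Module.finrank ℝ (affineSpan ℝ P).direction

/-- A (representative of a) virtual polytope: a pair `(P, Q)` standing for `P - Q`. -/
abbrev VP (n : ℕ) := Set (Vec n) × Set (Vec n)

/-- Two pairs represent the same virtual polytope: `P₁ - Q₁ = P₂ - Q₂` iff
`P₁ + Q₂ = P₂ + Q₁` (Minkowski sums). -/
def vEquiv {n : ℕ} (A B : VP n) : Prop :=
  A.1 + B.2 = B.1 + A.2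

/-- Both components are polytopes. -/
def IsPolyPair {n : ℕ} (A : VP n) : Prop :=
  IsPolytope A.1 ∧ IsPolytope A.2

/-- Scalar multiple of a virtual polytope: `λ(P - Q) := λP - λQ`. -/
def vSMul {n : ℕ} (c : ℝ) (A : VP n) : VP n := (c • A.1, c • A.2)

/-- Convex hull of finitely many virtual polytopes:
`conv(P₁-Q₁, …, P_m-Q_m) := conv(⋃ᵢ (Pᵢ + Σ_{k≠i} Q_k)) - Σ_k Q_k`. -/
def vConv {n m : ℕ} (V : Fin m → VP n) : VP n :=
  (convexHull ℝ (⋃ i, ((V i).1 + ∑ k ∈ Finset.univ.erase i, (V k).2)),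
   ∑ k, (V k).2)

/-- The dimension of a virtual polytope: `min{dim(A + B) : V = A - B}` over
polytope representations. -/
def vDim {n : ℕ} (V : VP n) : ℕ :=
  sInf {m | ∃ A B : Set (Vec n), IsPolytope A ∧ IsPolytope B ∧
    vEquiv (A, B) V ∧ polyDim (A + B) = m}

/-- Support function of a virtual polytope: `f_{P-Q} := f_P - f_Q`. -/
def vSuppFn {n : ℕ} (V : VP n) (x : Vec n) : ℝ :=
  suppFn V.1 x - suppFn V.2 x

/-- The recursively defined classes `Q̂_ℓ` of virtual polytopes dual to sparse maxout
networks with indegree constraints `d` and ranks `r` (layer `k` uses `d k`, `r k`);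
membership is up to equality of virtual polytopes. -/
def Qhat (n : ℕ) (d r : ℕ → ℕ) : ℕ → Set (VP n)
  | 0 => {V | IsPolyPair V ∧ ∃ v : Vec n, vEquiv V ({v}, {0})}
  | (k+1) => {V | IsPolyPair V ∧
      ∃ (α : Fin (r (k+1)) → Fin (d (k+1)) → ℝ) (W : Fin (d (k+1)) → VP n),
        (∀ j, W j ∈ Qhat n d r k) ∧
        vEquiv V (vConv (fun i => ∑ j, vSMul (α i j) (W j)))}

/-- `Q_n(ℓ,d,r)`: finite real linear combinations of elements of `Q̂_ℓ`. -/
def Qfull (n : ℕ) (d r : ℕ → ℕ) (ℓ : ℕ) : Set (VP n) :=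
  {V | IsPolyPair V ∧ ∃ (p : ℕ) (c : Fin p → ℝ) (W : Fin p → VP n),
    (∀ i, W i ∈ Qhat n d r ℓ) ∧ vEquiv V (∑ i, vSMul (c i) (W i))}

/-- `m_ℓ = Σ_{k=1}^ℓ (r_k - 1) ∏_{i=k+1}^ℓ d_i`. -/
def mval (d r : ℕ → ℕ) (ℓ : ℕ) : ℕ :=
  ∑ k ∈ Finset.Icc 1 ℓ, (r k - 1) * ∏ i ∈ Finset.Icc (k+1) ℓ, d i

/-- The recursively defined classes `N̂_ℓ` of functions computed by a single output
neuron of an indegree-`d`-constrained rank-`r` maxout network with `ℓ` hidden layers. -/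
def Nhat (n : ℕ) (d r : ℕ → ℕ) : ℕ → Set ((Vec n) → ℝ)
  | 0 => {f | ∃ v : Vec n, f = fun x => ∑ i, v i * x i}
  | (k+1) => {f | ∃ (α : Fin (r (k+1)) → Fin (d (k+1)) → ℝ)
      (g : Fin (d (k+1)) → (Vec n) → ℝ),
      (∀ j, g j ∈ Nhat n d r k) ∧
      f = fun x => ⨆ i, ∑ j, α i j * g j x}

/-- `N_n(ℓ,d,r)`: finite real linear combinations of functions in `N̂_ℓ`. -/
def Nfull (n : ℕ) (d r : ℕ → ℕ) (ℓ : ℕ) : Set ((Vec n) → ℝ) :=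
  {f | ∃ (p : ℕ) (c : Fin p → ℝ) (g : Fin p → (Vec n) → ℝ),
    (∀ i, g i ∈ Nhat n d r ℓ) ∧ f = fun x => ∑ i, c i * g i x}

/-- Unconstrained single-neuron classes `N̂_ℓ` (no indegree constraint). -/
def NhatU (n : ℕ) (r : ℕ → ℕ) : ℕ → Set ((Vec n) → ℝ)
  | 0 => {f | ∃ v : Vec n, f = fun x => ∑ i, v i * x i}
  | (k+1) => {f | ∃ (m : ℕ) (α : Fin (r (k+1)) → Fin m → ℝ)
      (g : Fin m → (Vec n) → ℝ),
      (∀ j, g j ∈ NhatU n r k) ∧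
      f = fun x => ⨆ i, ∑ j, α i j * g j x}

/-- `N_n(ℓ,r)`: finite real linear combinations of functions in the unconstrained `N̂_ℓ`. -/
def NfullU (n : ℕ) (r : ℕ → ℕ) (ℓ : ℕ) : Set ((Vec n) → ℝ) :=
  {f | ∃ (p : ℕ) (c : Fin p → ℝ) (g : Fin p → (Vec n) → ℝ),
    (∀ i, g i ∈ NhatU n r ℓ) ∧ f = fun x => ∑ i, c i * g i x}

/-- `MAX_n(m)`: finite real linear combinations of maxima of at most `m` linear functions. -/
def MAXn (n m : ℕ) : Set ((Vec n) → ℝ) :=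
  {f | ∃ (p : ℕ) (β : Fin p → ℝ) (a : Fin p → Fin m → Vec n),
    f = fun x => ∑ i, β i * ⨆ j, ∑ t, a i j t * x t}

/-!
Induct on `ℓ`, carrying a stronger invariant: for every base point `v` and every list of
`m_ℓ` coordinates, some actual polytope of `Q̂_ℓ` contains `v` and the points `v + e_c` for the
listed coordinates `c`, and agrees with `v` in all other coordinates; its dimension is then `m_ℓ`.
For the step, split the `m_{ℓ+1} = d m_ℓ + (r - 1)` coordinates into `d` blocks of size `m_ℓ`
and `r - 1` extra coordinates `x_k`, place polytopes `W_j` on the blocks at suitable base points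
`u_j`, and take `conv_i Σ_j α_ij W_j`. The all-ones row reaches `v + e_c` for the block
coordinates; the row doubling the column with `u_j = e_{x_k}` reaches `v + e_{x_k}`; and since
`r ≤ d` one column is left over to absorb `v - Σ_k e_{x_k}`, so that `Σ_j u_j = v`.
-/

section Polytope

variable {n : ℕ}

theorem isPolytope_iff {P : Set (Vec n)} :
    IsPolytope P ↔ ∃ s : Set (Vec n), s.Finite ∧ s.Nonempty ∧ P = convexHull ℝ s := by
  constructor
  · rintro ⟨s, hs, rfl⟩
    exact ⟨s, s.finite_toSet, hs, rfl⟩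
  · rintro ⟨s, hfin, hne, rfl⟩
    exact ⟨hfin.toFinset, by simpa using hne, by simp⟩

theorem isPolytope_singleton (v : Vec n) : IsPolytope ({v} : Set (Vec n)) :=
  isPolytope_iff.2 ⟨{v}, Set.finite_singleton v, Set.singleton_nonempty v, by simp⟩

theorem IsPolytope.smul {P : Set (Vec n)} (hP : IsPolytope P) (c : ℝ) : IsPolytope (c • P) := by
  obtain ⟨s, hfin, hne, rfl⟩ := isPolytope_iff.1 hP
  exact isPolytope_iff.2 ⟨c • s, hfin.smul_set, hne.smul_set, (convexHull_smul c s).symm⟩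

theorem IsPolytope.add {P Q : Set (Vec n)} (hP : IsPolytope P) (hQ : IsPolytope Q) :
    IsPolytope (P + Q) := by
  obtain ⟨s, hs, hs', rfl⟩ := isPolytope_iff.1 hP
  obtain ⟨t, ht, ht', rfl⟩ := isPolytope_iff.1 hQ
  exact isPolytope_iff.2 ⟨s + t, hs.add ht, hs'.add ht', (convexHull_add s t).symm⟩

theorem isPolytope_sum {ι : Type*} (s : Finset ι) {P : ι → Set (Vec n)}
    (hP : ∀ i ∈ s, IsPolytope (P i)) : IsPolytope (∑ i ∈ s, P i) := by
  classical
  induction s using Finset.induction_on with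
  | empty => exact isPolytope_singleton 0
  | insert i s hi ih =>
    rw [Finset.sum_insert hi]
    exact (hP i (s.mem_insert_self i)).add (ih fun j hj => hP j (Finset.mem_insert_of_mem hj))

theorem isPolytope_convexHull_iUnion {ι : Type*} [Finite ι] [Nonempty ι] {P : ι → Set (Vec n)}
    (hP : ∀ i, IsPolytope (P i)) : IsPolytope (convexHull ℝ (⋃ i, P i)) := by
  choose s hfin hne hs using fun i => isPolytope_iff.1 (hP i)
  refine isPolytope_iff.2 ⟨⋃ i, s i, Set.finite_iUnion hfin, ?_, ?_⟩
  · exact Set.nonempty_iUnion.2 ⟨Classical.arbitrary ι, hne _⟩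
  · simp_rw [hs]
    exact (convexHull ℝ).closure_iSup_closure s

end Polytope

section Qhat

variable {n : ℕ} {d r : ℕ → ℕ}

theorem singleton_mem_Qhat_zero (v : Vec n) : ({v}, 0) ∈ Qhat n d r 0 :=
  ⟨⟨isPolytope_singleton v, isPolytope_singleton 0⟩, v, rfl⟩

theorem isPolytope_of_mem_Qhat {ℓ : ℕ} {V : VP n}
    (hV : V ∈ Qhat n d r ℓ) : IsPolytope V.1 := by
  cases ℓ <;> exact hV.1.1

theorem convexHull_iUnion_mem_Qhat_succ {k : ℕ} {ρ γ : Type*} [Fintype γ] [Nonempty ρ]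
    (eρ : ρ ≃ Fin (r (k + 1))) (eγ : γ ≃ Fin (d (k + 1))) (α : ρ → γ → ℝ)
    {W : γ → Set (Vec n)} (hW : ∀ j, IsPolytope (W j)) (hWQ : ∀ j, (W j, 0) ∈ Qhat n d r k) :
    (convexHull ℝ (⋃ i, ∑ j, α i j • W j), 0) ∈ Qhat n d r (k + 1) := by
  have : Finite ρ := .of_equiv _ eρ.symm
  have hP := isPolytope_convexHull_iUnion fun i =>
    isPolytope_sum Finset.univ fun j _ => (hW j).smul (α i j)
  refine ⟨⟨hP, isPolytope_singleton 0⟩, fun i j => α (eρ.symm i) (eγ.symm j),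
    fun j => (W (eγ.symm j), 0), fun j => hWQ _, ?_⟩
  have hrow : ∀ i, ∑ j, vSMul (α (eρ.symm i) (eγ.symm j)) (W (eγ.symm j), (0 : Set (Vec n)))
      = (∑ j, α (eρ.symm i) j • W j, 0) := by
    intro i
    ext1
    · rw [Prod.fst_sum]
      exact eγ.symm.sum_comp fun j => α (eρ.symm i) j • W j
    · rw [Prod.snd_sum]
      exact Finset.sum_eq_zero fun j _ => smul_zero _
  simp only [vEquiv, vConv, hrow, Finset.sum_const_zero, add_zero]
  exact congrArg (convexHull ℝ) (eρ.symm.iSup_comp (g := fun i => ∑ j, α i j • W j)).symm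

end Qhat

section CoordFlat

variable {n : ℕ} {κ : Type*}

structure SpansCoordFlat (P : Set (Vec n)) (v : Vec n) (g : κ → Fin n) : Prop where
  base_mem : v ∈ P
  add_single_mem : ∀ t, v + Pi.single (g t) 1 ∈ P
  apply_eq : ∀ x ∈ P, ∀ c ∉ Set.range g, x c = v c

theorem mem_span_single_of_apply_eq_zero {g : κ → Fin n} {z : Vec n}
    (hz : ∀ c ∉ Set.range g, z c = 0) :
    z ∈ Submodule.span ℝ (Set.range fun t => (Pi.single (g t) 1 : Vec n)) := by
  have hrange : (Set.range fun t => (Pi.single (g t) 1 : Vec n)) =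
      Pi.basisFun ℝ (Fin n) '' Set.range g := by
    rw [← Set.range_comp]
    simp only [Function.comp_def, Pi.basisFun_apply]
  rw [hrange, Module.Basis.mem_span_image]
  intro c hc
  by_contra hcg
  simp [hz c hcg] at hc

variable {P : Set (Vec n)} {v : Vec n} {g : κ → Fin n}

theorem SpansCoordFlat.vectorSpan_eq (h : SpansCoordFlat P v g) :
    vectorSpan ℝ P = Submodule.span ℝ (Set.range fun t => (Pi.single (g t) 1 : Vec n)) := by
  apply le_antisymm
  · rw [vectorSpan_def, Submodule.span_le]
    rintro _ ⟨x, hx, y, hy, rfl⟩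
    refine mem_span_single_of_apply_eq_zero fun c hc => ?_
    simp [vsub_eq_sub, h.apply_eq x hx c hc, h.apply_eq y hy c hc]
  · rw [Submodule.span_le]
    rintro _ ⟨t, rfl⟩
    simpa using vsub_mem_vectorSpan ℝ (h.add_single_mem t) h.base_mem

theorem SpansCoordFlat.polyDim_eq [Fintype κ] (h : SpansCoordFlat P v g)
    (hg : Function.Injective g) : polyDim P = Fintype.card κ := by
  have hli : LinearIndependent ℝ fun t => (Pi.single (g t) 1 : Vec n) := by
    simpa [Function.comp_def] using (Pi.basisFun ℝ (Fin n)).linearIndependent.comp g hg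
  rw [polyDim, direction_affineSpan, h.vectorSpan_eq, finrank_span_eq_card hli]

theorem SpansCoordFlat.of_comp {κ' : Type*} {e : κ' → κ} (he : Function.Surjective e)
    (h : SpansCoordFlat P v (g ∘ e)) : SpansCoordFlat P v g where
  base_mem := h.base_mem
  add_single_mem t := by
    obtain ⟨t', rfl⟩ := he t
    exact h.add_single_mem t'
  apply_eq x hx c hc := h.apply_eq x hx c (by rwa [he.range_comp])

end CoordFlat

section MinkowskiSum

variable {n : ℕ} {κ γ : Type*} [Fintype γ] {W : γ → Set (Vec n)} {u : γ → Vec n}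
  {g : γ → κ → Fin n}

theorem sum_smul_mem_sum_smul {y : γ → Vec n} (hy : ∀ j, y j ∈ W j) (a : γ → ℝ) :
    ∑ j, a j • y j ∈ ∑ j, a j • W j :=
  Set.finsetSum_mem_finsetSum _ _ _ fun j _ => Set.smul_mem_smul_set (hy j)

theorem add_smul_single_mem_sum_smul (h : ∀ j, SpansCoordFlat (W j) (u j) (g j)) (a : γ → ℝ)
    (j : γ) (t : κ) : ∑ i, a i • u i + a j • Pi.single (g j t) 1 ∈ ∑ i, a i • W i := by
  classical
  set y : γ → Vec n := fun i => if i = j then u i + Pi.single (g j t) 1 else u i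
  have hy : ∀ i, y i ∈ W i := by
    intro i
    by_cases hij : i = j
    · subst hij; simpa [y] using (h i).add_single_mem t
    · simpa [y, hij] using (h i).base_mem
  have hsum : ∑ i, a i • y i = ∑ i, a i • u i + a j • Pi.single (g j t) 1 := by
    have hterm : ∀ i, a i • y i =
        a i • u i + if i = j then a i • (Pi.single (g j t) 1 : Vec n) else 0 := by
      intro i
      by_cases hij : i = j <;> simp [y, hij]
    simp only [hterm, Finset.sum_add_distrib, Finset.sum_ite_eq', Finset.mem_univ, if_true]
  exact hsum ▸ sum_smul_mem_sum_smul hy a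

theorem apply_eq_of_mem_sum_smul (h : ∀ j, SpansCoordFlat (W j) (u j) (g j)) (a : γ → ℝ)
    {x : Vec n} (hx : x ∈ ∑ j, a j • W j) {c : Fin n} (hc : ∀ j, c ∉ Set.range (g j)) :
    x c = (∑ j, a j • u j) c := by
  obtain ⟨y, hy, rfl⟩ := (Set.mem_fintype_sum _ _).1 hx
  choose z hz hzy using fun j => Set.mem_smul_set.1 (hy j)
  simp only [← hzy, Finset.sum_apply, Pi.smul_apply, smul_eq_mul,
    fun j => (h j).apply_eq (z j) (hz j) c (hc j)]

end MinkowskiSum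

section Layer

variable {n s : ℕ} {τ κ : Type*} [Fintype τ]

-- Base points `u` and weights `α` of the inductive step: column `inl k` carries `e_{x k}` and is
-- doubled by row `some k`, row `none` is all ones, and column `inr none` makes `Σ_j u_j = v`.
def layerBase (x : Fin s → Fin n) (v : Vec n) : Fin s ⊕ Option τ → Vec n
  | .inl k => Pi.single (x k) 1
  | .inr none => v - ∑ k, Pi.single (x k) 1
  | .inr (some _) => 0

def layerWeight : Option (Fin s) → Fin s ⊕ Option τ → ℝ
  | some k, .inl j => if j = k then 2 else 1
  | _, _ => 1

theorem sum_layerBase (x : Fin s → Fin n) (v : Vec n) :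
    ∑ j, layerBase (τ := τ) x v j = v := by
  simp [layerBase, Fintype.sum_sum_type, Fintype.sum_option]

theorem sum_layerWeight_smul_layerBase (x : Fin s → Fin n) (v : Vec n) (i : Option (Fin s)) :
    ∑ j, layerWeight i j • layerBase (τ := τ) x v j =
      v + i.elim 0 fun k => Pi.single (x k) 1 := by
  cases i with
  | none => simpa [layerWeight] using sum_layerBase x v
  | some k =>
    have hterm : ∀ j, layerWeight (τ := τ) (some k) (.inl j) • (Pi.single (x j) 1 : Vec n) =
        Pi.single (x j) 1 + if j = k then Pi.single (x j) 1 else 0 := by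
      intro j
      by_cases hj : j = k <;> simp [layerWeight, hj, two_smul]
    simp only [Fintype.sum_sum_type, Fintype.sum_option, layerBase, hterm,
      Finset.sum_add_distrib, Finset.sum_ite_eq', Finset.mem_univ, if_true]
    simp only [layerWeight, one_smul, smul_zero, Finset.sum_const_zero, add_zero, Option.elim_some]
    abel

theorem SpansCoordFlat.convexHull_iUnion_layer {v : Vec n} {g : ((Fin s ⊕ Option τ) × κ) ⊕ Fin s → Fin n}
    {W : Fin s ⊕ Option τ → Set (Vec n)}
    (hW : ∀ j, SpansCoordFlat (W j) (layerBase (fun k => g (.inr k)) v j)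
      fun t => g (.inl (j, t))) :
    SpansCoordFlat (convexHull ℝ (⋃ i, ∑ j, layerWeight i j • W j)) v g := by
  set A : Option (Fin s) → Set (Vec n) := fun i => ∑ j, layerWeight i j • W j
  have hAP : ∀ i, A i ⊆ convexHull ℝ (⋃ i, A i) := fun i =>
    (Set.subset_iUnion A i).trans (subset_convexHull ℝ _)
  have hrow : ∀ i, v + (i.elim 0 fun k => Pi.single (g (.inr k)) 1) ∈ A i := by
    intro i
    rw [← sum_layerWeight_smul_layerBase (τ := τ) _ v i]
    exact sum_smul_mem_sum_smul (fun j => (hW j).base_mem) (layerWeight i)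
  refine ⟨by simpa using hAP none (hrow none), ?_, ?_⟩
  · rintro (⟨j, t⟩ | k)
    · have h := add_smul_single_mem_sum_smul hW (layerWeight none) j t
      simp only [sum_layerWeight_smul_layerBase, Option.elim_none, add_zero] at h
      simpa [layerWeight] using hAP none h
    · exact hAP (some k) (hrow (some k))
  · intro y hy c hc
    have hcx : ∀ k, c ≠ g (.inr k) := fun k hck => hc ⟨.inr k, hck.symm⟩
    have hcg : ∀ j, c ∉ Set.range fun t => g (.inl (j, t)) := fun j ⟨t, hct⟩ =>
      hc ⟨.inl (j, t), hct⟩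
    refine convexHull_min (Set.iUnion_subset fun i y' hy' => ?_)
      (convex_hyperplane (LinearMap.proj (R := ℝ) c).isLinear (v c)) hy
    change y' c = v c
    rw [apply_eq_of_mem_sum_smul hW _ hy' hcg, sum_layerWeight_smul_layerBase]
    cases i <;> simp [hcx]

end Layer

theorem mval_succ (d r : ℕ → ℕ) (ℓ : ℕ) :
    mval d r (ℓ + 1) = d (ℓ + 1) * mval d r ℓ + (r (ℓ + 1) - 1) := by
  simp only [mval]
  rw [Finset.sum_Icc_succ_top (by omega), Finset.Icc_eq_empty_of_lt (Nat.lt_succ_self _),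
    Finset.prod_empty, mul_one, Finset.mul_sum]
  congr 1
  refine Finset.sum_congr rfl fun k hk => ?_
  rw [Finset.prod_Icc_succ_top (by simp at hk; omega)]
  ring

theorem exists_mem_Qhat_spansCoordFlat {n : ℕ} {d r : ℕ → ℕ} (hr : ∀ k, 1 ≤ r k)
    (hdr : ∀ k, r k ≤ d k) (ℓ : ℕ) (g : Fin (mval d r ℓ) → Fin n) (v : Vec n) :
    ∃ P : Set (Vec n), (P, 0) ∈ Qhat n d r ℓ ∧ SpansCoordFlat P v g := by
  induction ℓ generalizing v with
  | zero =>
    refine ⟨{v}, singleton_mem_Qhat_zero v, Set.mem_singleton v,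
      fun t => absurd t.2 (by simp [mval]), ?_⟩
    rintro x rfl c -
    rfl
  | succ ℓ ih =>
    have hr₁ := hr (ℓ + 1)
    have hdr₁ := hdr (ℓ + 1)
    let γ := Fin (r (ℓ + 1) - 1) ⊕ Option (Fin (d (ℓ + 1) - r (ℓ + 1)))
    have hγ : Fintype.card γ = d (ℓ + 1) := by
      simp only [γ, Fintype.card_sum, Fintype.card_option, Fintype.card_fin]
      omega
    have eρ : Option (Fin (r (ℓ + 1) - 1)) ≃ Fin (r (ℓ + 1)) :=
      Fintype.equivOfCardEq (by simp only [Fintype.card_option, Fintype.card_fin]; omega)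
    have eγ : γ ≃ Fin (d (ℓ + 1)) := Fintype.equivOfCardEq (by rw [hγ, Fintype.card_fin])
    have eκ : (γ × Fin (mval d r ℓ)) ⊕ Fin (r (ℓ + 1) - 1) ≃ Fin (mval d r (ℓ + 1)) :=
      Fintype.equivOfCardEq (by rw [Fintype.card_sum, Fintype.card_prod, hγ, mval_succ]; simp)
    choose W hWQ hWflat using fun j : γ =>
      ih (fun t => g (eκ (.inl (j, t)))) (layerBase (fun k => g (eκ (.inr k))) v j)
    exact ⟨_, convexHull_iUnion_mem_Qhat_succ eρ eγ layerWeight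
      (fun j => isPolytope_of_mem_Qhat (hWQ j)) hWQ,
      (SpansCoordFlat.convexHull_iUnion_layer (g := g ∘ eκ) hWflat).of_comp eκ.surjective⟩

/-- the dimension bound `m_ℓ` is attained by an actual polytope in `Q̂_ℓ`. -/
theorem Qhat_dim_bound_attained {n : ℕ} (ℓ : ℕ) (d r : ℕ → ℕ)
    (hr : ∀ k, 1 ≤ r k) (hdr : ∀ k, r k ≤ d k) (hn : mval d r ℓ ≤ n) :
    ∃ P : Set (Vec n), IsPolytope P ∧ (P, ({0} : Set (Vec n))) ∈ Qhat n d r ℓ ∧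
      polyDim P = mval d r ℓ := by
  obtain ⟨P, hPQ, hflat⟩ := exists_mem_Qhat_spansCoordFlat hr hdr ℓ (Fin.castLE hn) 0
  refine ⟨P, isPolytope_of_mem_Qhat hPQ, hPQ, ?_⟩
  rw [hflat.polyDim_eq (Fin.castLE_injective hn), Fintype.card_fin]
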